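/- arXiv:1904.03304 — 5 statements merged into one kernel-verified Lean document; each statement's English description precedes it below -/
import Mathlib

section
/- If A and B are n×n Hermitian positive semidefinite matrices with A ⪰ B (i.e., A − B positive semidefinite), then tr_k[A] ≥ tr_k[B]; if A ≻ B then tr_k[A] > tr_k[B]. -/
/-!
Principal submatrices of `A - B` inherit positive (semi)definiteness, so it suffices to compare
determinants. For `B` positive definite write `B = V⋆ V` with `V` invertible; then
`det (B + D) = det B * det (1 + W⋆ D W)` with `W = V⁻¹`, and `W⋆ D W` is positive
(semi)definite together with `D`, so the last factor is a product of terms `1 + λᵢ ≥ 1`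
(`> 1`).
For singular `B` the claim reduces to `0 ≤ det A` (resp. `0 < det A`).
-/

noncomputable section
open scoped Matrix ComplexOrder

def trK {n : ℕ} (k : ℕ) (M : Matrix (Fin n) (Fin n) ℂ) : ℂ :=
  ∑ s ∈ Finset.powersetCard k (Finset.univ : Finset (Fin n)),
    (M.submatrix (Subtype.val : {i : Fin n // i ∈ s} → Fin n)
      (Subtype.val : {i : Fin n // i ∈ s} → Fin n)).det

def mpow {n : ℕ} (A : Matrix (Fin n) (Fin n) ℂ) (t : ℝ) : Matrix (Fin n) (Fin n) ℂ :=
  cfc (fun x : ℝ => x ^ t) A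

def mexp {n : ℕ} (A : Matrix (Fin n) (Fin n) ℂ) : Matrix (Fin n) (Fin n) ℂ :=
  cfc Real.exp A

def mlog {n : ℕ} (A : Matrix (Fin n) (Fin n) ℂ) : Matrix (Fin n) (Fin n) ℂ :=
  cfc Real.log A

namespace Matrix

variable {m 𝕜 : Type*} [Fintype m] [DecidableEq m] [RCLike 𝕜] {M A B : Matrix m m 𝕜}

theorem IsHermitian.det_one_add (hM : M.IsHermitian) :
    det (1 + M) = ∏ i, (1 + (hM.eigenvalues i : 𝕜)) := by
  have hcfc : 1 + M = cfc (fun x : ℝ => 1 + x) M := by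
    rw [cfc_add .., cfc_const_one .., cfc_id' ..]
  rw [hcfc, hM.cfc_eq]
  simp [IsHermitian.cfc, -Unitary.conjStarAlgAut_apply]

open scoped MatrixOrder in
theorem PosDef.exists_isUnit_det_add_eq (hB : B.PosDef) :
    ∃ W : Matrix m m 𝕜, IsUnit W ∧
      ∀ D, det (B + D) = det B * det (1 + star W * D * W) := by
  obtain ⟨V, hV, rfl⟩ := CStarAlgebra.isStrictlyPositive_iff_eq_star_mul_self.mp
    hB.isStrictlyPositive
  have hinv : V⁻¹ * V = 1 := nonsing_inv_mul V ((isUnit_iff_isUnit_det V).mp hV)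
  refine ⟨V⁻¹, isUnit_nonsing_inv_iff.mpr hV, fun D => ?_⟩
  have hfactor : star V * V + D = star V * (1 + star V⁻¹ * D * V⁻¹) * V := by
    simp only [Matrix.mul_add, Matrix.add_mul, Matrix.mul_one, ← Matrix.mul_assoc, ← star_mul,
      hinv, star_one, Matrix.one_mul]
    simp only [Matrix.mul_assoc, hinv, Matrix.mul_one]
  rw [hfactor, det_mul, det_mul, det_mul (star _)]
  ring

theorem PosSemidef.one_le_det_one_add (hM : M.PosSemidef) : 1 ≤ det (1 + M) := by
  rw [hM.isHermitian.det_one_add]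
  exact Finset.one_le_prod fun i _ =>
    le_add_of_nonneg_right (RCLike.ofReal_nonneg.mpr (hM.eigenvalues_nonneg i))

theorem PosDef.one_lt_det_one_add [Nonempty m] (hM : M.PosDef) : 1 < det (1 + M) := by
  rw [hM.isHermitian.det_one_add]
  refine Finset.prod_const_one.symm.trans_lt <|
    Finset.prod_lt_prod_of_nonempty (fun _ _ => zero_lt_one)
      (fun i _ => lt_add_of_pos_right 1 (RCLike.ofReal_pos.mpr (hM.eigenvalues_pos i)))
      Finset.univ_nonempty

theorem det_le_det_of_posSemidef_sub (hB : B.PosSemidef)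
    (hAB : (A - B).PosSemidef) : det B ≤ det A := by
  rcases eq_or_ne B.det 0 with hdet | hdet
  · simpa [hdet] using (hAB.add hB).det_nonneg
  · obtain ⟨W, hW, hfactor⟩ := (hB.posDef_iff_det_ne_zero.mpr hdet).exists_isUnit_det_add_eq
    rw [← add_sub_cancel B A, hfactor]
    exact le_mul_of_one_le_right hB.det_nonneg
      ((IsUnit.posSemidef_star_left_conjugate_iff hW).mpr hAB).one_le_det_one_add

theorem det_lt_det_of_posDef_sub [Nonempty m] (hB : B.PosSemidef)
    (hAB : (A - B).PosDef) : det B < det A := by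
  rcases eq_or_ne B.det 0 with hdet | hdet
  · simpa [hdet] using (hAB.add_posSemidef hB).det_pos
  · have hB' := hB.posDef_iff_det_ne_zero.mpr hdet
    obtain ⟨W, hW, hfactor⟩ := hB'.exists_isUnit_det_add_eq
    rw [← add_sub_cancel B A, hfactor]
    exact lt_mul_of_one_lt_right hB'.det_pos
      ((IsUnit.posDef_star_left_conjugate_iff hW).mpr hAB).one_lt_det_one_add

end Matrix

section trK

variable {n k : ℕ} {A B : Matrix (Fin n) (Fin n) ℂ}

theorem trK_le_trK (hB : B.PosSemidef) (hAB : (A - B).PosSemidef) : trK k B ≤ trK k A :=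
  Finset.sum_le_sum fun _ _ => Matrix.det_le_det_of_posSemidef_sub (hB.submatrix _)
    (by simpa only [Matrix.submatrix_sub, Pi.sub_apply] using hAB.submatrix Subtype.val)

theorem trK_lt_trK (hk : 1 ≤ k) (hkn : k ≤ n) (hB : B.PosSemidef) (hAB : (A - B).PosDef) :
    trK k B < trK k A := by
  refine Finset.sum_lt_sum_of_nonempty (Finset.powersetCard_nonempty.mpr (by simpa using hkn))
    fun s hs => ?_
  have : Nonempty s := by
    rw [Finset.mem_powersetCard_univ] at hs
    exact (Finset.card_pos.mp (hs ▸ hk)).to_subtype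
  exact Matrix.det_lt_det_of_posDef_sub (hB.submatrix _)
    (by simpa only [Matrix.submatrix_sub, Pi.sub_apply] using hAB.submatrix Subtype.val_injective)

end trK

theorem ktrace_monotone_general {n k : ℕ} (hk : 1 ≤ k) (hkn : k ≤ n)
    (A B : Matrix (Fin n) (Fin n) ℂ) (hB : B.PosSemidef) :
    ((A - B).PosSemidef → (trK k B).re ≤ (trK k A).re) ∧
    ((A - B).PosDef → (trK k B).re < (trK k A).re) :=
  ⟨fun hAB => (Complex.le_def.mp (trK_le_trK hB hAB)).1,
    fun hAB => (Complex.lt_def.mp (trK_lt_trK hk hkn hB hAB)).1⟩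

/-- monotonicity of the k-trace w.r.t. the Löwner order. -/
theorem ktrace_monotone {n k : ℕ} (hk : 1 ≤ k) (hkn : k ≤ n)
    (A B : Matrix (Fin n) (Fin n) ℂ) (hA : A.PosSemidef) (hB : B.PosSemidef) :
    ((A - B).PosSemidef → (trK k B).re ≤ (trK k A).re) ∧
    ((A - B).PosDef → (trK k B).re < (trK k A).re) :=
  ktrace_monotone_general hk hkn A B hB
end
end

section
/- k-trace Peierls–Bogoliubov inequality: the function A ↦ log tr_k[exp(A)] is convex on the space of n×n Hermitian matrices. -/
noncomputable section
open scoped Matrix ComplexOrder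

/-!
Write `f x = log ∑_{|s| = k} exp (∑_{i ∈ s} x i)`. Then `log tr_k[exp A] = f (λ A)`: `tr_k` is the
`k`-th coefficient of `det (1 + X • A)`, so Sylvester's identity `det (1 + A B) = det (1 + B A)`
makes it invariant under unitary conjugation. The function `f` is convex (Hölder) and symmetric,
so by Birkhoff's theorem it can only decrease under a doubly stochastic matrix. For unitary `U` the
diagonal of `U⋆ M U` is `(|W i j|²) *ᵥ λ M` with `W = U⋆ V` unitary (`V` diagonalising `M`), hence
`f (diag (U⋆ M U)) ≤ f (λ M)`. Choosing `U` to diagonalise `a X + b Y` gives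
`λ (a X + b Y) = a diag (U⋆ X U) + b diag (U⋆ Y U)`, and convexity of `f` does the rest.
-/

open Finset Matrix

theorem convexOn_log_sum_exp {ι : Type*} (S : Finset ι) :
    ConvexOn ℝ Set.univ fun x : ι → ℝ => Real.log (∑ i ∈ S, Real.exp (x i)) := by
  refine ⟨convex_univ, fun x _ y _ a b ha hb hab => ?_⟩
  rcases S.eq_empty_or_nonempty with rfl | hS
  · simp
  have hpos : ∀ z : ι → ℝ, 0 < ∑ i ∈ S, Real.exp (z i) :=
    fun z => sum_pos (fun _ _ => Real.exp_pos _) hS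
  have normalized : ∀ z : ι → ℝ,
      ∑ i ∈ S, Real.exp (z i - Real.log (∑ i ∈ S, Real.exp (z i))) = 1 := fun z => by
    simp only [Real.exp_sub, ← sum_div, Real.exp_log (hpos z), div_self (hpos z).ne']
  set LX := Real.log (∑ i ∈ S, Real.exp (x i))
  set LY := Real.log (∑ i ∈ S, Real.exp (y i))
  -- Hölder's inequality, as Jensen for `exp` after normalising both sums to `1`
  have key : ∑ i ∈ S, Real.exp ((a • x + b • y) i) ≤ Real.exp (a * LX + b * LY) :=
    calc ∑ i ∈ S, Real.exp ((a • x + b • y) i)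
        = Real.exp (a * LX + b * LY) * ∑ i ∈ S, Real.exp (a * (x i - LX) + b * (y i - LY)) := by
          rw [mul_sum]
          refine sum_congr rfl fun i _ => ?_
          rw [← Real.exp_add]
          congr 1
          simp only [Pi.add_apply, Pi.smul_apply, smul_eq_mul]
          ring
      _ ≤ Real.exp (a * LX + b * LY) *
            ∑ i ∈ S, (a * Real.exp (x i - LX) + b * Real.exp (y i - LY)) := by
          gcongr with i
          exact convexOn_exp.2 (Set.mem_univ _) (Set.mem_univ _) ha hb hab
      _ = Real.exp (a * LX + b * LY) := by
          rw [sum_add_distrib, ← mul_sum, ← mul_sum, normalized, normalized, mul_one, mul_one,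
            hab, mul_one]
  simpa [smul_eq_mul] using (Real.log_le_iff_le_exp (hpos _)).2 key

section DoublyStochastic

variable {n : Type*} [Fintype n] [DecidableEq n]

theorem ConvexOn.apply_mulVec_le_of_mem_doublyStochastic {f : (n → ℝ) → ℝ}
    (hf : ConvexOn ℝ Set.univ f) (hperm : ∀ (σ : Equiv.Perm n) x, f (x ∘ σ) = f x)
    {M : Matrix n n ℝ} (hM : M ∈ doublyStochastic ℝ n) (x : n → ℝ) : f (M *ᵥ x) ≤ f x := by
  let applyTo : Matrix n n ℝ →ₗ[ℝ] n → ℝ :=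
    { toFun := fun M => M *ᵥ x
      map_add' := fun _ _ => add_mulVec _ _ _
      map_smul' := fun _ _ => smul_mulVec _ _ _ }
  rw [← SetLike.mem_coe, doublyStochastic_eq_convexHull_permMatrix] at hM
  obtain ⟨_, ⟨σ, rfl⟩, hσ⟩ :=
    (hf.comp_linearMap applyTo).exists_ge_of_mem_convexHull (Set.subset_univ _) hM
  simpa [applyTo, permMatrix_mulVec, hperm] using hσ

theorem Matrix.normSq_mem_doublyStochastic {W : Matrix n n ℂ} (hW : W ∈ unitaryGroup n ℂ) :
    Matrix.of (fun i j => Complex.normSq (W i j)) ∈ doublyStochastic ℝ n := by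
  have hrow : ∀ i, ∑ j, Complex.normSq (W i j) = ((W * star W) i i).re := fun i => by
    simp [mul_apply, Complex.mul_conj]
  have hcol : ∀ j, ∑ i, Complex.normSq (W i j) = ((star W * W) j j).re := fun j => by
    simp [mul_apply, Complex.mul_conj, mul_comm]
  refine mem_doublyStochastic_iff_sum.2
    ⟨fun _ _ => Complex.normSq_nonneg _, fun i => ?_, fun j => ?_⟩
  · simp [hrow, mem_unitaryGroup_iff.mp hW]
  · simp [hcol, mem_unitaryGroup_iff'.mp hW]

theorem Matrix.re_mul_diagonal_mul_star_apply_self (W : Matrix n n ℂ) (μ : n → ℝ) (i : n) :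
    ((W * diagonal (fun j => (μ j : ℂ)) * star W) i i).re =
      (Matrix.of (fun i j => Complex.normSq (W i j)) *ᵥ μ) i := by
  rw [mul_apply, Complex.re_sum]
  simp only [mul_diagonal, star_apply, mulVec, dotProduct, of_apply]
  refine sum_congr rfl fun j _ => ?_
  rw [mul_right_comm, Complex.star_def, Complex.mul_conj, ← Complex.ofReal_mul,
    Complex.ofReal_re]

theorem Matrix.IsHermitian.re_star_eigenvectorUnitary_mul_mul_apply_self {𝕜 : Type*} [RCLike 𝕜]
    {A : Matrix n n 𝕜} (hA : A.IsHermitian) (i : n) :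
    RCLike.re ((star (hA.eigenvectorUnitary : Matrix n n 𝕜) * A * hA.eigenvectorUnitary) i i) =
      hA.eigenvalues i := by
  have := congr_fun₂ hA.conjStarAlgAut_star_eigenvectorUnitary i i
  rw [Unitary.conjStarAlgAut_star_apply] at this
  simp [this]

end DoublyStochastic

def logEsymmExp {ι : Type*} [Fintype ι] (k : ℕ) (x : ι → ℝ) : ℝ :=
  Real.log (∑ s ∈ powersetCard k univ, Real.exp (∑ i ∈ s, x i))

section logEsymmExp

variable {ι : Type*} [Fintype ι]

theorem convexOn_logEsymmExp (k : ℕ) : ConvexOn ℝ Set.univ (logEsymmExp (ι := ι) k) := by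
  let subsetSums : (ι → ℝ) →ₗ[ℝ] Finset ι → ℝ :=
    { toFun := fun x s => ∑ i ∈ s, x i
      map_add' := fun _ _ => funext fun _ => sum_add_distrib
      map_smul' := fun c x => funext fun s => (mul_sum s x c).symm }
  exact (convexOn_log_sum_exp (powersetCard k univ)).comp_linearMap subsetSums

theorem logEsymmExp_comp_perm (k : ℕ) (σ : Equiv.Perm ι) (x : ι → ℝ) :
    logEsymmExp k (x ∘ σ) = logEsymmExp k x := by
  have hmap : (powersetCard k univ).map (mapEmbedding σ.toEmbedding).toEmbedding =
      powersetCard k (univ : Finset ι) := by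
    rw [← powersetCard_map, map_univ_equiv]
  unfold logEsymmExp
  conv_rhs => rw [← hmap, sum_map]
  simp [sum_map]

theorem logEsymmExp_re_diag_conj_le [DecidableEq ι] (k : ℕ) {M U : Matrix ι ι ℂ}
    (hM : M.IsHermitian) (hU : U ∈ unitaryGroup ι ℂ) :
    logEsymmExp k (fun i => ((star U * M * U) i i).re) ≤ logEsymmExp k hM.eigenvalues := by
  set V : Matrix ι ι ℂ := (hM.eigenvectorUnitary : Matrix ι ι ℂ)
  set W := star U * V
  have hW : W ∈ unitaryGroup ι ℂ := mul_mem (Unitary.star_mem hU) hM.eigenvectorUnitary.2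
  have hconj : star U * M * U = W * diagonal (fun j => (hM.eigenvalues j : ℂ)) * star W := by
    conv_lhs => rw [hM.spectral_theorem, Unitary.conjStarAlgAut_apply]
    simp [W, V, Matrix.mul_assoc, star_mul]
    rfl
  simp only [hconj, re_mul_diagonal_mul_star_apply_self]
  exact (convexOn_logEsymmExp k).apply_mulVec_le_of_mem_doublyStochastic
    (logEsymmExp_comp_perm k) (normSq_mem_doublyStochastic hW) _

end logEsymmExp

section trK

variable {n : ℕ} (k : ℕ)

open Polynomial in
theorem trK_eq_coeff_det_one_add_X_smul (M : Matrix (Fin n) (Fin n) ℂ) :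
    trK k M = (det (1 + (X : ℂ[X]) • M.map C)).coeff k :=
  (coeff_det_one_add_X_smul_eq_sum_minors M k).symm

theorem trK_mul_comm (A B : Matrix (Fin n) (Fin n) ℂ) : trK k (A * B) = trK k (B * A) := by
  simp only [trK_eq_coeff_det_one_add_X_smul, Matrix.map_mul]
  rw [← smul_mul_assoc, det_one_add_mul_comm, mul_smul_comm]

theorem trK_unitary_conj {U : Matrix (Fin n) (Fin n) ℂ} (hU : U ∈ unitaryGroup (Fin n) ℂ)
    (M : Matrix (Fin n) (Fin n) ℂ) : trK k (U * M * star U) = trK k M := by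
  rw [trK_mul_comm, ← Matrix.mul_assoc, mem_unitaryGroup_iff'.mp hU, Matrix.one_mul]

theorem trK_diagonal (d : Fin n → ℂ) :
    trK k (diagonal d) = ∑ s ∈ powersetCard k univ, ∏ i ∈ s, d i := by
  refine sum_congr rfl fun s _ => ?_
  rw [submatrix_diagonal _ _ Subtype.val_injective, det_diagonal]
  exact prod_coe_sort s d

theorem log_re_trK_mexp {A : Matrix (Fin n) (Fin n) ℂ} (hA : A.IsHermitian) :
    Real.log (trK k (mexp A)).re = logEsymmExp k hA.eigenvalues := by
  have htrK : trK k (mexp A) =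
      ((∑ s ∈ powersetCard k univ, Real.exp (∑ i ∈ s, hA.eigenvalues i) : ℝ) : ℂ) := by
    rw [mexp, hA.cfc_eq, IsHermitian.cfc, Unitary.conjStarAlgAut_apply,
      trK_unitary_conj k hA.eigenvectorUnitary.2, trK_diagonal]
    push_cast
    simp [Complex.exp_sum]
  rw [htrK, Complex.ofReal_re, logEsymmExp]

end trK

theorem ktrace_peierls_bogoliubov_general {n k : ℕ} :
    ConvexOn ℝ {A : Matrix (Fin n) (Fin n) ℂ | A.IsHermitian}
      (fun A => Real.log (trK k (mexp A)).re) := by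
  refine ⟨fun X hX Y hY a b _ _ _ => (hX.smul (.all a)).add (hY.smul (.all b)),
    fun X hX Y hY a b ha hb hab => ?_⟩
  have hP : (a • X + b • Y).IsHermitian := (hX.smul (.all a)).add (hY.smul (.all b))
  set U : Matrix (Fin n) (Fin n) ℂ := (hP.eigenvectorUnitary : Matrix (Fin n) (Fin n) ℂ)
  let diagIn (A : Matrix (Fin n) (Fin n) ℂ) (i : Fin n) : ℝ := ((star U * A * U) i i).re
  have hdiag : hP.eigenvalues = a • diagIn X + b • diagIn Y := by
    ext i
    rw [← hP.re_star_eigenvectorUnitary_mul_mul_apply_self]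
    simp [diagIn, U, Matrix.mul_add, Matrix.add_mul]
  calc Real.log (trK k (mexp (a • X + b • Y))).re
      = logEsymmExp k (a • diagIn X + b • diagIn Y) := by rw [log_re_trK_mexp k hP, hdiag]
    _ ≤ a • logEsymmExp k (diagIn X) + b • logEsymmExp k (diagIn Y) :=
        (convexOn_logEsymmExp k).2 (Set.mem_univ _) (Set.mem_univ _) ha hb hab
    _ ≤ a • logEsymmExp k hX.eigenvalues + b • logEsymmExp k hY.eigenvalues := by
        gcongr
        · exact logEsymmExp_re_diag_conj_le k hX hP.eigenvectorUnitary.2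
        · exact logEsymmExp_re_diag_conj_le k hY hP.eigenvectorUnitary.2
    _ = a • Real.log (trK k (mexp X)).re + b • Real.log (trK k (mexp Y)).re := by
        rw [log_re_trK_mexp k hX, log_re_trK_mexp k hY]

/-- k-trace Peierls–Bogoliubov inequality. -/
theorem ktrace_peierls_bogoliubov {n k : ℕ} (hk : 1 ≤ k) (hkn : k ≤ n) :
    ConvexOn ℝ {A : Matrix (Fin n) (Fin n) ℂ | A.IsHermitian}
      (fun A => Real.log (trK k (mexp A)).re) :=
  ktrace_peierls_bogoliubov_general
end
end

section
/- For any Hermitian positive semidefinite n×n matrix A, tr_k[A] ≤ tr_k[diag(A)], where diag(A) is the diagonal part of A. Equivalently, (tr_k[A])^{1/k} ≤ (tr_k[diag(A)])^{1/k}. -/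
/-! Hadamard's inequality `det M ≤ ∏ i, M i i` for positive semidefinite `M`, applied to each
principal submatrix, bounds every term of `trK k A` by the corresponding term of
`trK k (diagonal A)`. If some `M i i` vanishes, the `i`-th basis vector lies in the kernel of `M`
and `det M = 0`. Otherwise conjugating by `diagonal (M i i) ^ (-1/2)` normalises the diagonal
to `1`; then the eigenvalues `μ` sum to the dimension, and `μ ≤ exp (μ - 1)` gives
`det = ∏ μ ≤ exp 0 = 1`. -/

noncomputable section
open scoped Matrix ComplexOrder

namespace Matrix

variable {n 𝕜 : Type*} [Fintype n] [DecidableEq n] [RCLike 𝕜] {A : Matrix n n 𝕜}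

namespace PosSemidef

theorem det_le_one_of_diag_eq_one (hA : A.PosSemidef) (hdiag : ∀ i, A i i = 1) : A.det ≤ 1 := by
  set μ := hA.1.eigenvalues
  have hμ_sum : ∑ i, μ i = Fintype.card n := by
    have := hA.1.trace_eq_sum_eigenvalues
    simp only [trace, diag, hdiag, Finset.sum_const, Finset.card_univ, nsmul_one] at this
    exact_mod_cast this.symm
  have hμ_prod : ∏ i, μ i ≤ 1 := calc
    ∏ i, μ i ≤ ∏ i, Real.exp (μ i - 1) :=
      Finset.prod_le_prod (fun i _ => hA.eigenvalues_nonneg i)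
        (fun i _ => by linarith [Real.add_one_le_exp (μ i - 1)])
    _ = 1 := by simp [← Real.exp_sum, Finset.sum_sub_distrib, hμ_sum]
  rw [hA.1.det_eq_prod_eigenvalues, ← RCLike.ofReal_prod, ← RCLike.ofReal_one,
    RCLike.ofReal_le_ofReal]
  exact hμ_prod

theorem det_eq_zero_of_diag_eq_zero (hA : A.PosSemidef) {i : n} (hi : A i i = 0) :
    A.det = 0 := by
  refine exists_mulVec_eq_zero_iff.mp ⟨Pi.single i 1, by simp, ?_⟩
  rw [← hA.dotProduct_mulVec_zero_iff]
  simpa using hi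

theorem det_le_prod_diag (hA : A.PosSemidef) : A.det ≤ ∏ i, A i i := by
  by_cases hzero : ∃ i, A i i = 0
  · obtain ⟨i, hi⟩ := hzero
    rw [hA.det_eq_zero_of_diag_eq_zero hi,
      Finset.prod_eq_zero (f := fun i => A i i) (Finset.mem_univ i) hi]
  simp only [not_exists] at hzero
  set a : n → ℝ := fun i => RCLike.re (A i i)
  have ha_coe : ∀ i, (a i : 𝕜) = A i i := hA.1.coe_re_apply_self
  have ha : ∀ i, 0 < a i := fun i => by
    rw [← RCLike.ofReal_pos (K := 𝕜), ha_coe]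
    exact lt_of_le_of_ne hA.diag_nonneg (Ne.symm (hzero i))
  set d : n → ℝ := fun i => (Real.sqrt (a i))⁻¹
  have hd : ∀ i, d i * d i = (a i)⁻¹ := fun i => by
    rw [← mul_inv, Real.mul_self_sqrt (ha i).le]
  set D : Matrix n n 𝕜 := diagonal fun i => (d i : 𝕜)
  have hDH : Dᴴ = D := by simp [D, diagonal_conjTranspose]
  have hB : (Dᴴ * A * D).det ≤ 1 :=
    (hA.conjTranspose_mul_mul_same D).det_le_one_of_diag_eq_one fun i => by
      rw [hDH]
      simp only [D, diagonal_mul, mul_diagonal]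
      rw [← ha_coe, mul_right_comm, ← RCLike.ofReal_mul, ← RCLike.ofReal_mul, hd,
        inv_mul_cancel₀ (ha i).ne', RCLike.ofReal_one]
  have hdetB : (Dᴴ * A * D).det = ((∏ i, a i)⁻¹ : ℝ) * A.det := by
    rw [hDH, det_mul, det_mul, mul_right_comm, ← det_mul]
    simp only [D, diagonal_mul_diagonal, det_diagonal]
    simp_rw [← RCLike.ofReal_mul, hd, ← RCLike.ofReal_prod, Finset.prod_inv_distrib]
  have hprod : (∏ i, A i i) = ((∏ i, a i : ℝ) : 𝕜) := by simp_rw [RCLike.ofReal_prod, ha_coe]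
  have hprod_pos : (0 : 𝕜) < (∏ i, a i : ℝ) :=
    RCLike.ofReal_pos.mpr (Finset.prod_pos fun i _ => ha i)
  rwa [hdetB, RCLike.ofReal_inv, inv_mul_le_iff₀ hprod_pos, mul_one, ← hprod] at hB

end PosSemidef

end Matrix

theorem trK_le_trK_diagonal {n : ℕ} (k : ℕ) {A : Matrix (Fin n) (Fin n) ℂ} (hA : A.PosSemidef) :
    trK k A ≤ trK k (Matrix.diagonal fun i => A i i) :=
  Finset.sum_le_sum fun s _ => by
    rw [Matrix.submatrix_diagonal _ _ Subtype.val_injective, Matrix.det_diagonal]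
    exact (hA.submatrix _).det_le_prod_diag

theorem ktrace_le_ktrace_diag_general {n k : ℕ} (A : Matrix (Fin n) (Fin n) ℂ) (hA : A.PosSemidef) :
    (trK k A).re ≤ (trK k (Matrix.diagonal fun i => A i i)).re :=
  (Complex.le_def.mp (trK_le_trK_diagonal k hA)).1

/-- the k-trace of a PSD matrix is dominated by the
k-trace of its diagonal part. -/
theorem ktrace_le_ktrace_diag {n k : ℕ} (hk : 1 ≤ k) (hkn : k ≤ n)
    (A : Matrix (Fin n) (Fin n) ℂ) (hA : A.PosSemidef) :
    (trK k A).re ≤ (trK k (Matrix.diagonal fun i => A i i)).re :=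
  ktrace_le_ktrace_diag_general A hA
end
end

section
/- If f : ℝ → [0,∞) is concave as a scalar function, then A ↦ (tr_k[f(A)])^{1/k} is concave on the cone of n×n Hermitian positive semidefinite matrices. -/
noncomputable section
open scoped Matrix ComplexOrder

/-! Write `λ(A)` for the eigenvalues, so that `tr_k[f(A)] = e_k(f ∘ λ(A))` and the claim is the
concavity of `A ↦ ψ(λ(A))` for `ψ(x) = e_k(f ∘ x)^{1/k}`.

On the nonnegative orthant `e_k^{1/k}` is monotone, homogeneous and superadditive, hence concave;
so `ψ` is concave, and it is permutation invariant. For superadditivity write `e_k` as the product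
of the ratios `e_{j+1}/e_j`, `j < k`: each ratio is superadditive (Marcus–Lopes), and a geometric
mean of superadditive quantities is superadditive (weighted AM-GM). Marcus–Lopes goes by induction
on `j`: `(j + 2) e_{j+2}/e_{j+1} (x) = ∑ᵢ xᵢ ρᵢ / (xᵢ + ρᵢ)` with `ρᵢ` the `j`-th ratio of `x`
without `xᵢ`, and `(u, ρ) ↦ u ρ / (u + ρ)` is superadditive and increasing in `ρ`. All this is
done for positive vectors and extended to the orthant by continuity.

If `V` diagonalizes `H` and `W` is unitary, the diagonal of `W* H W` is `(|Tᵢⱼ|²) λ(H)` with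
`T = W* V`; this matrix is doubly stochastic, so Birkhoff's theorem gives
`ψ(λ(H)) ≤ ψ(diag(W* H W))`. Taking `W` to diagonalize `aA + bB`, linearity of the diagonal and
concavity of `ψ` give `a ψ(λ(A)) + b ψ(λ(B)) ≤ ψ(λ(aA + bB))`. -/

open Finset

lemma mul_div_add_add_mul_div_add_le {u v ρ σ τ : ℝ} (hu : 0 < u) (hv : 0 < v) (hρ : 0 < ρ)
    (hσ : 0 < σ) (hτ : ρ + σ ≤ τ) :
    u * ρ / (u + ρ) + v * σ / (v + σ) ≤ (u + v) * τ / (u + v + τ) := by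
  have hτ0 : 0 < τ := by linarith
  calc u * ρ / (u + ρ) + v * σ / (v + σ) ≤ (u + v) * (ρ + σ) / (u + v + (ρ + σ)) := by
        rw [div_add_div _ _ (by positivity) (by positivity),
          div_le_div_iff₀ (by positivity) (by positivity)]
        nlinarith [sq_nonneg (u * σ - v * ρ), mul_pos hu hv, mul_pos hρ hσ]
    _ ≤ (u + v) * τ / (u + v + τ) := by
        rw [div_le_div_iff₀ (by positivity) (by positivity)]
        nlinarith [mul_nonneg (sq_nonneg (u + v)) (sub_nonneg.2 hτ)]

section Esymm

variable {ι : Type*}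

def esymm (s : Finset ι) (k : ℕ) (x : ι → ℝ) : ℝ :=
  ∑ t ∈ s.powersetCard k, ∏ i ∈ t, x i

variable {s : Finset ι} {k : ℕ} {x y : ι → ℝ}

@[simp]
lemma esymm_zero (s : Finset ι) (x : ι → ℝ) : esymm s 0 x = 1 := by
  simp [esymm]

lemma esymm_one (s : Finset ι) (x : ι → ℝ) : esymm s 1 x = ∑ i ∈ s, x i := by
  simp [esymm, powersetCard_one]

lemma esymm_nonneg (hx : ∀ i ∈ s, 0 ≤ x i) : 0 ≤ esymm s k x :=
  sum_nonneg fun _ ht => prod_nonneg fun i hi => hx i ((mem_powersetCard.1 ht).1 hi)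

lemma esymm_pos (hx : ∀ i ∈ s, 0 < x i) (hk : k ≤ #s) : 0 < esymm s k x :=
  sum_pos (fun _ ht => prod_pos fun i hi => hx i ((mem_powersetCard.1 ht).1 hi))
    (powersetCard_nonempty.2 hk)

lemma esymm_mono (hx : ∀ i ∈ s, 0 ≤ x i) (hxy : ∀ i ∈ s, x i ≤ y i) :
    esymm s k x ≤ esymm s k y :=
  sum_le_sum fun _ ht => prod_le_prod (fun i hi => hx i ((mem_powersetCard.1 ht).1 hi))
    fun i hi => hxy i ((mem_powersetCard.1 ht).1 hi)

lemma esymm_smul (c : ℝ) : esymm s k (c • x) = c ^ k * esymm s k x := by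
  rw [esymm, esymm, mul_sum]
  refine sum_congr rfl fun t ht => ?_
  simp only [Pi.smul_apply, smul_eq_mul]
  rw [prod_mul_distrib, prod_const, (mem_powersetCard.1 ht).2]

lemma continuous_esymm (s : Finset ι) (k : ℕ) : Continuous (esymm s k) :=
  continuous_finsetSum _ fun _ _ => continuous_finsetProd _ fun i _ => continuous_apply i

lemma esymm_comp_perm [Fintype ι] (σ : Equiv.Perm ι) (x : ι → ℝ) :
    esymm univ k (x ∘ σ) = esymm univ k x := by
  simp only [esymm, ← esymm_map_val, ← Multiset.map_map]
  congr 2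
  simp

def esymmRatio (s : Finset ι) (k : ℕ) (x : ι → ℝ) : ℝ :=
  esymm s (k + 1) x / esymm s k x

lemma esymmRatio_pos (hx : ∀ i ∈ s, 0 < x i) (hk : k + 1 ≤ #s) : 0 < esymmRatio s k x :=
  div_pos (esymm_pos hx hk) (esymm_pos hx (by omega))

lemma esymmRatio_zero (s : Finset ι) (x : ι → ℝ) : esymmRatio s 0 x = ∑ i ∈ s, x i := by
  rw [esymmRatio, esymm_zero, div_one, esymm_one]

lemma esymm_eq_prod_esymmRatio (hx : ∀ i ∈ s, 0 < x i) (hk : k ≤ #s) :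
    esymm s k x = ∏ j ∈ range k, esymmRatio s j x := by
  induction k with
  | zero => simp
  | succ m ih =>
    rw [prod_range_succ, ← ih (by omega), esymmRatio,
      mul_div_cancel₀ _ (esymm_pos hx (by omega)).ne']

section Erase

variable [DecidableEq ι]

lemma esymm_succ_of_mem {i : ι} (hi : i ∈ s) (k : ℕ) (x : ι → ℝ) :
    esymm s (k + 1) x = x i * esymm (s.erase i) k x + esymm (s.erase i) (k + 1) x := by
  have hi' : i ∉ s.erase i := notMem_erase i s
  rw [esymm, ← insert_erase hi, powersetCard_succ_insert hi', sum_union, add_comm,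
    sum_image, esymm, esymm, mul_sum, erase_insert hi']
  · congr 1
    refine sum_congr rfl fun t ht => prod_insert fun h => hi' ((mem_powersetCard.1 ht).1 h)
  · intro t ht u hu htu
    have hit : i ∉ t := fun h => hi' ((mem_powersetCard.1 ht).1 h)
    have hiu : i ∉ u := fun h => hi' ((mem_powersetCard.1 hu).1 h)
    rw [← erase_insert hit, htu, erase_insert hiu]
  · refine disjoint_left.2 fun t ht ht' => ?_
    obtain ⟨u, -, rfl⟩ := mem_image.1 ht'
    exact hi' ((mem_powersetCard.1 ht).1 (mem_insert_self i u))

lemma sum_mul_esymm_erase (s : Finset ι) (k : ℕ) (x : ι → ℝ) :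
    ∑ i ∈ s, x i * esymm (s.erase i) k x = (k + 1) * esymm s (k + 1) x := by
  -- both sides count pairs `(i, t)` with `i ∈ t ⊆ s`, `#t = k + 1`, weighted by `∏ j ∈ t, x j`
  have hlhs : ∑ i ∈ s, x i * esymm (s.erase i) k x =
      ∑ p ∈ s.sigma fun i => (s.erase i).powersetCard k, x p.1 * ∏ j ∈ p.2, x j := by
    rw [sum_sigma]
    exact sum_congr rfl fun i _ => by rw [esymm, mul_sum]
  have hrhs : (k + 1) * esymm s (k + 1) x =
      ∑ p ∈ (s.powersetCard (k + 1)).sigma fun t => t, x p.2 * ∏ j ∈ p.1.erase p.2, x j := by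
    rw [sum_sigma, esymm, mul_sum]
    refine sum_congr rfl fun t ht => ?_
    calc (k + 1 : ℝ) * ∏ j ∈ t, x j = ∑ _i ∈ t, ∏ j ∈ t, x j := by
          rw [sum_const, (mem_powersetCard.1 ht).2, nsmul_eq_mul, Nat.cast_succ]
      _ = _ := sum_congr rfl fun i hi => (mul_prod_erase t x hi).symm
  rw [hlhs, hrhs]
  refine sum_nbij' (fun p => ⟨insert p.1 p.2, p.1⟩) (fun p => ⟨p.2, p.1.erase p.2⟩)
    ?_ ?_ ?_ ?_ ?_
  · rintro ⟨i, t⟩ hp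
    simp only [mem_sigma, mem_powersetCard, subset_erase] at hp ⊢
    exact ⟨⟨insert_subset hp.1 hp.2.1.1, by rw [card_insert_of_notMem hp.2.1.2, hp.2.2]⟩,
      mem_insert_self _ _⟩
  · rintro ⟨t, i⟩ hp
    simp only [mem_sigma, mem_powersetCard, subset_erase] at hp ⊢
    exact ⟨hp.1.1 hp.2, ⟨(erase_subset _ _).trans hp.1.1, notMem_erase _ _⟩,
      by rw [card_erase_of_mem hp.2, hp.1.2, Nat.add_sub_cancel]⟩
  · rintro ⟨i, t⟩ hp
    simp only [mem_sigma, mem_powersetCard, subset_erase] at hp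
    simp [erase_insert hp.2.1.2]
  · rintro ⟨t, i⟩ hp
    simp [insert_erase (mem_sigma.1 hp).2]
  · rintro ⟨i, t⟩ hp
    simp only [mem_sigma, mem_powersetCard, subset_erase] at hp
    simp [erase_insert hp.2.1.2]

lemma succ_succ_mul_esymmRatio_succ (hx : ∀ i ∈ s, 0 < x i) (hk : k + 2 ≤ #s) :
    (k + 2) * esymmRatio s (k + 1) x =
      ∑ i ∈ s, x i * esymmRatio (s.erase i) k x / (x i + esymmRatio (s.erase i) k x) := by
  have hEuler : (k + 2) * esymmRatio s (k + 1) x =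
      ∑ i ∈ s, x i * esymm (s.erase i) (k + 1) x / esymm s (k + 1) x := by
    rw [← sum_div, sum_mul_esymm_erase, esymmRatio]
    push_cast
    ring
  rw [hEuler]
  refine sum_congr rfl fun i hi => ?_
  have hxe : ∀ j ∈ s.erase i, 0 < x j := fun j hj => hx j (mem_of_mem_erase hj)
  have hcard : k + 1 ≤ #(s.erase i) := by rw [card_erase_of_mem hi]; omega
  have := esymm_pos hxe hcard
  have := esymm_pos hxe (k := k) (by omega)
  have := hx i hi
  rw [esymm_succ_of_mem hi, esymmRatio]
  field_simp

end Erase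

/-- **Marcus–Lopes inequality**. -/
theorem esymmRatio_add_le (hk : k + 1 ≤ #s) (hx : ∀ i ∈ s, 0 < x i) (hy : ∀ i ∈ s, 0 < y i) :
    esymmRatio s k x + esymmRatio s k y ≤ esymmRatio s k (x + y) := by
  classical
  induction k generalizing s with
  | zero => simp [esymmRatio_zero, sum_add_distrib]
  | succ m ih =>
    have hxy : ∀ i ∈ s, 0 < (x + y) i := fun i hi => add_pos (hx i hi) (hy i hi)
    rw [← mul_le_mul_iff_right₀ (by positivity : (0 : ℝ) < m + 2), mul_add,
      succ_succ_mul_esymmRatio_succ hx hk, succ_succ_mul_esymmRatio_succ hy hk,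
      succ_succ_mul_esymmRatio_succ hxy hk, ← sum_add_distrib]
    refine sum_le_sum fun i hi => ?_
    have hcard : m + 1 ≤ #(s.erase i) := by rw [card_erase_of_mem hi]; omega
    have hxe : ∀ j ∈ s.erase i, 0 < x j := fun j hj => hx j (mem_of_mem_erase hj)
    have hye : ∀ j ∈ s.erase i, 0 < y j := fun j hj => hy j (mem_of_mem_erase hj)
    exact mul_div_add_add_mul_div_add_le (hx i hi) (hy i hi) (esymmRatio_pos hxe hcard)
      (esymmRatio_pos hye hcard) (ih hcard hxe hye)

end Esymm

section Concavity

open Filter Topology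

variable {ι κ : Type*}

lemma prod_rpow_add_prod_rpow_le {t : Finset κ} {w a b : κ → ℝ} (hw : ∀ j ∈ t, 0 ≤ w j)
    (hw1 : ∑ j ∈ t, w j = 1) (ha : ∀ j ∈ t, 0 ≤ a j) (hb : ∀ j ∈ t, 0 ≤ b j)
    (hab : ∀ j ∈ t, 0 < a j + b j) :
    ∏ j ∈ t, a j ^ w j + ∏ j ∈ t, b j ^ w j ≤ ∏ j ∈ t, (a j + b j) ^ w j := by
  set c := fun j => a j + b j
  have key : ∀ u : κ → ℝ, (∀ j ∈ t, 0 ≤ u j) →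
      ∏ j ∈ t, u j ^ w j ≤ (∑ j ∈ t, w j * (u j / c j)) * ∏ j ∈ t, c j ^ w j := by
    intro u hu
    have hdiv : ∀ j ∈ t, 0 ≤ u j / c j := fun j hj => div_nonneg (hu j hj) (hab j hj).le
    calc ∏ j ∈ t, u j ^ w j = (∏ j ∈ t, (u j / c j) ^ w j) * ∏ j ∈ t, c j ^ w j := by
          rw [← prod_mul_distrib]
          refine prod_congr rfl fun j hj => ?_
          rw [← Real.mul_rpow (hdiv j hj) (hab j hj).le, div_mul_cancel₀ _ (hab j hj).ne']
      _ ≤ _ := mul_le_mul_of_nonneg_right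
          (Real.geom_mean_le_arith_mean_weighted t w _ hw hw1 hdiv)
          (prod_nonneg fun j hj => Real.rpow_nonneg (hab j hj).le _)
  have hsum : ∑ j ∈ t, w j * (a j / c j) + ∑ j ∈ t, w j * (b j / c j) = 1 := by
    rw [← sum_add_distrib, ← hw1]
    refine sum_congr rfl fun j hj => ?_
    rw [← mul_add, ← add_div, div_self (hab j hj).ne', mul_one]
  calc ∏ j ∈ t, a j ^ w j + ∏ j ∈ t, b j ^ w j
      ≤ (∑ j ∈ t, w j * (a j / c j)) * ∏ j ∈ t, c j ^ w j +
          (∑ j ∈ t, w j * (b j / c j)) * ∏ j ∈ t, c j ^ w j := add_le_add (key a ha) (key b hb)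
    _ = ∏ j ∈ t, (a j + b j) ^ w j := by rw [← add_mul, hsum, one_mul]

variable {s : Finset ι} {k : ℕ} {x y : ι → ℝ}

lemma esymm_rpow_inv_eq_prod (hx : ∀ i ∈ s, 0 < x i) (hk : k ≤ #s) :
    esymm s k x ^ (k⁻¹ : ℝ) = ∏ j ∈ range k, esymmRatio s j x ^ (k⁻¹ : ℝ) := by
  rw [esymm_eq_prod_esymmRatio hx hk, Real.finsetProd_rpow]
  exact fun j hj => (esymmRatio_pos hx (by simp at hj; omega)).le

lemma esymm_rpow_inv_smul (hk : 1 ≤ k) {c : ℝ} (hc : 0 ≤ c) (hx : ∀ i ∈ s, 0 ≤ x i) :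
    esymm s k (c • x) ^ (k⁻¹ : ℝ) = c * esymm s k x ^ (k⁻¹ : ℝ) := by
  rw [esymm_smul, Real.mul_rpow (by positivity) (esymm_nonneg hx), ← Real.rpow_natCast,
    ← Real.rpow_mul hc, mul_inv_cancel₀ (by positivity), Real.rpow_one]

lemma esymm_rpow_inv_add_le_of_pos (hk : 1 ≤ k) (hks : k ≤ #s) (hx : ∀ i ∈ s, 0 < x i)
    (hy : ∀ i ∈ s, 0 < y i) :
    esymm s k x ^ (k⁻¹ : ℝ) + esymm s k y ^ (k⁻¹ : ℝ) ≤ esymm s k (x + y) ^ (k⁻¹ : ℝ) := by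
  have hxy : ∀ i ∈ s, 0 < (x + y) i := fun i hi => add_pos (hx i hi) (hy i hi)
  have hR : ∀ z : ι → ℝ, (∀ i ∈ s, 0 < z i) → ∀ j ∈ range k, 0 < esymmRatio s j z :=
    fun z hz j hj => esymmRatio_pos hz (by simp at hj; omega)
  have hw1 : ∑ _j ∈ range k, (k⁻¹ : ℝ) = 1 := by
    rw [sum_const, card_range, nsmul_eq_mul, mul_inv_cancel₀ (by positivity)]
  rw [esymm_rpow_inv_eq_prod hx hks, esymm_rpow_inv_eq_prod hy hks,
    esymm_rpow_inv_eq_prod hxy hks]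
  refine (prod_rpow_add_prod_rpow_le (fun _ _ => by positivity) hw1
    (fun j hj => (hR x hx j hj).le) (fun j hj => (hR y hy j hj).le)
    fun j hj => add_pos (hR x hx j hj) (hR y hy j hj)).trans ?_
  refine prod_le_prod (fun j hj => by have := hR x hx j hj; have := hR y hy j hj; positivity)
    fun j hj => Real.rpow_le_rpow (by have := hR x hx j hj; have := hR y hy j hj; positivity)
      (esymmRatio_add_le (by simp at hj; omega) hx hy) (by positivity)

lemma esymm_rpow_inv_add_le (hk : 1 ≤ k) (hks : k ≤ #s) (hx : ∀ i ∈ s, 0 ≤ x i)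
    (hy : ∀ i ∈ s, 0 ≤ y i) :
    esymm s k x ^ (k⁻¹ : ℝ) + esymm s k y ^ (k⁻¹ : ℝ) ≤ esymm s k (x + y) ^ (k⁻¹ : ℝ) := by
  set Φ : (ι → ℝ) → ℝ := fun z => esymm s k z ^ (k⁻¹ : ℝ)
  have hΦ : Continuous Φ :=
    (continuous_esymm s k).rpow_const fun _ => Or.inr (by positivity)
  -- shift `x` and `y` by `ε > 0` into the positive orthant and let `ε → 0`
  set sh : (ι → ℝ) → ℝ → ι → ℝ := fun z ε => z + fun _ => ε
  have hsh : ∀ z, Continuous (sh z) := fun _ =>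
    continuous_const.add (continuous_pi fun _ => continuous_id)
  have hsh0 : ∀ z, sh z 0 = z := fun z => add_eq_left.2 rfl
  have hlim : Tendsto (fun ε => Φ (sh x ε) + Φ (sh y ε)) (𝓝[>] 0) (𝓝 (Φ x + Φ y)) :=
    (((hΦ.comp (hsh x)).add (hΦ.comp (hsh y))).tendsto' 0 _
      (by simp only [Pi.add_apply, Function.comp_apply, hsh0])).mono_left nhdsWithin_le_nhds
  have hlim' : Tendsto (fun ε => Φ (sh x ε + sh y ε)) (𝓝[>] 0) (𝓝 (Φ (x + y))) :=
    ((hΦ.comp ((hsh x).add (hsh y))).tendsto' 0 _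
      (by simp only [Pi.add_apply, Function.comp_apply, hsh0])).mono_left nhdsWithin_le_nhds
  refine le_of_tendsto_of_tendsto hlim hlim' (eventually_nhdsWithin_of_forall fun ε hε => ?_)
  exact esymm_rpow_inv_add_le_of_pos hk hks (fun i hi => add_pos_of_nonneg_of_pos (hx i hi) hε)
    (fun i hi => add_pos_of_nonneg_of_pos (hy i hi) hε)

lemma concaveOn_esymm_rpow_inv (hk : 1 ≤ k) (hks : k ≤ #s) :
    ConcaveOn ℝ {x : ι → ℝ | ∀ i ∈ s, 0 ≤ x i} fun x => esymm s k x ^ (k⁻¹ : ℝ) := by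
  refine ⟨fun x hx y hy a b ha hb _ i hi => ?_, fun x hx y hy a b ha hb _ => ?_⟩
  · have := hx i hi; have := hy i hi
    simp only [Pi.add_apply, Pi.smul_apply, smul_eq_mul]
    positivity
  · have hax : ∀ i ∈ s, 0 ≤ (a • x) i := fun i hi => mul_nonneg ha (hx i hi)
    have hby : ∀ i ∈ s, 0 ≤ (b • y) i := fun i hi => mul_nonneg hb (hy i hi)
    simp only [smul_eq_mul]
    rw [← esymm_rpow_inv_smul hk ha hx, ← esymm_rpow_inv_smul hk hb hy]
    exact esymm_rpow_inv_add_le hk hks hax hby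

theorem concaveOn_esymm_comp_rpow_inv (hk : 1 ≤ k) (hks : k ≤ #s) {f : ℝ → ℝ}
    (hf0 : ∀ t, 0 ≤ f t) (hf : ConcaveOn ℝ Set.univ f) :
    ConcaveOn ℝ Set.univ fun x : ι → ℝ => esymm s k (f ∘ x) ^ (k⁻¹ : ℝ) := by
  refine ⟨convex_univ, fun x _ y _ a b ha hb hab => ?_⟩
  have hcomb : ∀ i ∈ s, 0 ≤ (a • (f ∘ x) + b • (f ∘ y)) i := fun i _ => by
    have := hf0 (x i); have := hf0 (y i)
    simp only [Pi.add_apply, Pi.smul_apply, Function.comp_apply, smul_eq_mul]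
    positivity
  calc a • esymm s k (f ∘ x) ^ (k⁻¹ : ℝ) + b • esymm s k (f ∘ y) ^ (k⁻¹ : ℝ)
      ≤ esymm s k (a • (f ∘ x) + b • (f ∘ y)) ^ (k⁻¹ : ℝ) :=
        (concaveOn_esymm_rpow_inv hk hks).2 (fun i _ => hf0 (x i)) (fun i _ => hf0 (y i))
          ha hb hab
    _ ≤ esymm s k (f ∘ (a • x + b • y)) ^ (k⁻¹ : ℝ) := by
        refine Real.rpow_le_rpow (esymm_nonneg hcomb) (esymm_mono hcomb fun i _ => ?_)
          (by positivity)
        simpa using hf.2 (Set.mem_univ (x i)) (Set.mem_univ (y i)) ha hb hab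

end Concavity

section Spectral

open Matrix Polynomial

lemma trK_cfc_eq_esymm {n k : ℕ} {A : Matrix (Fin n) (Fin n) ℂ} (hA : A.IsHermitian) (f : ℝ → ℝ)
    (hk : k ≤ n) : trK k (cfc f A) = esymm univ k (f ∘ hA.eigenvalues) := by
  have h : (cfc f A).charpoly.coeff (Fintype.card (Fin n) - k) = (-1) ^ k * trK k (cfc f A) :=
    charpoly_coeff_eq_sum_minors _ k (by simpa using hk)
  have hprod : ∀ r : Fin n → ℂ,
      ∏ i, (X - C (r i)) = ((univ.val.map r).map fun t => X - C t).prod := fun r => by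
    rw [Multiset.map_map]; rfl
  rw [hA.charpoly_cfc_eq f, hprod, Multiset.prod_X_sub_C_coeff _ (by simp), esymm_map_val] at h
  simp only [Multiset.card_map, card_val, card_univ, Fintype.card_fin,
    Nat.sub_sub_self hk] at h
  rw [← mul_right_inj' (pow_ne_zero k (neg_ne_zero.2 one_ne_zero) : ((-1 : ℂ) ^ k) ≠ 0), ← h,
    esymm]
  push_cast
  rfl

variable {m : Type*} [Fintype m] [DecidableEq m]

def unistochastic (T : Matrix m m ℂ) : Matrix m m ℝ :=
  of fun i j => Complex.normSq (T i j)

lemma unistochastic_mem_doublyStochastic {T : Matrix m m ℂ} (hT : T ∈ unitaryGroup m ℂ) :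
    unistochastic T ∈ doublyStochastic ℝ m := by
  refine mem_doublyStochastic_iff_sum.2 ⟨fun i j => Complex.normSq_nonneg _, fun i => ?_,
    fun j => ?_⟩
  · have h := congrFun (congrFun (mem_unitaryGroup_iff.1 hT) i) i
    simp only [mul_apply, star_apply, Complex.star_def, Complex.mul_conj, one_apply_eq] at h
    exact_mod_cast h
  · have h := congrFun (congrFun (mem_unitaryGroup_iff'.1 hT) j) j
    simp only [mul_apply, star_apply, Complex.star_def, mul_comm (starRingEnd ℂ _),
      Complex.mul_conj, one_apply_eq] at h
    exact_mod_cast h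

lemma diag_mul_diagonal_mul_star_re (T : Matrix m m ℂ) (d : m → ℝ) :
    (fun i => ((T * diagonal (RCLike.ofReal ∘ d : m → ℂ) * star T : Matrix m m ℂ) i i).re) =
      unistochastic T *ᵥ d := by
  ext i
  rw [mul_apply, Complex.re_sum]
  refine sum_congr rfl fun j _ => ?_
  rw [mul_diagonal, star_apply, Complex.star_def, mul_right_comm, Complex.mul_conj]
  simp [unistochastic]

lemma ConcaveOn.le_apply_mulVec_of_mem_doublyStochastic {g : (m → ℝ) → ℝ}
    (hg : ConcaveOn ℝ Set.univ g) (hsym : ∀ (σ : Equiv.Perm m) x, g (x ∘ σ) = g x)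
    {S : Matrix m m ℝ} (hS : S ∈ doublyStochastic ℝ m) (x : m → ℝ) : g x ≤ g (S *ᵥ x) := by
  rw [← SetLike.mem_coe, doublyStochastic_eq_convexHull_permMatrix] at hS
  refine convexHull_min (t := {S | g x ≤ g (S *ᵥ x)}) ?_ ?_ hS
  · rintro _ ⟨σ, rfl⟩
    simp [permMatrix_mulVec, hsym]
  · intro S₁ h₁ S₂ h₂ a b ha hb hab
    calc g x = a • g x + b • g x := by rw [← add_smul, hab, one_smul]
      _ ≤ a • g (S₁ *ᵥ x) + b • g (S₂ *ᵥ x) :=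
        add_le_add (smul_le_smul_of_nonneg_left h₁ ha) (smul_le_smul_of_nonneg_left h₂ hb)
      _ ≤ g (a • (S₁ *ᵥ x) + b • (S₂ *ᵥ x)) := hg.2 trivial trivial ha hb hab
      _ = g ((a • S₁ + b • S₂) *ᵥ x) := by rw [add_mulVec, smul_mulVec, smul_mulVec]

variable {g : (m → ℝ) → ℝ}

lemma ConcaveOn.apply_eigenvalues_le_apply_diag_conj (hg : ConcaveOn ℝ Set.univ g)
    (hsym : ∀ (σ : Equiv.Perm m) x, g (x ∘ σ) = g x) {H W : Matrix m m ℂ} (hH : H.IsHermitian)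
    (hW : W ∈ unitaryGroup m ℂ) : g hH.eigenvalues ≤ g fun i => ((star W * H * W) i i).re := by
  set T : Matrix m m ℂ := star W * hH.eigenvectorUnitary
  have hT : T ∈ unitaryGroup m ℂ := mul_mem (Unitary.star_mem hW) hH.eigenvectorUnitary.2
  have hconj : star W * H * W = T * diagonal (RCLike.ofReal ∘ hH.eigenvalues) * star T := by
    conv_lhs => rw [hH.spectral_theorem]
    simp [T, star_mul, mul_assoc]
  rw [hconj, diag_mul_diagonal_mul_star_re]
  exact hg.le_apply_mulVec_of_mem_doublyStochastic hsym (unistochastic_mem_doublyStochastic hT) _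

lemma ConcaveOn.le_apply_eigenvalues_smul_add_smul (hg : ConcaveOn ℝ Set.univ g)
    (hsym : ∀ (σ : Equiv.Perm m) x, g (x ∘ σ) = g x) {A B : Matrix m m ℂ} (hA : A.IsHermitian)
    (hB : B.IsHermitian) {a b : ℝ} (hC : (a • A + b • B).IsHermitian) (ha : 0 ≤ a) (hb : 0 ≤ b)
    (hab : a + b = 1) :
    a • g hA.eigenvalues + b • g hB.eigenvalues ≤ g hC.eigenvalues := by
  set W : Matrix m m ℂ := (hC.eigenvectorUnitary : Matrix m m ℂ)
  set diag : Matrix m m ℂ → m → ℝ := fun M i => ((star W * M * W) i i).re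
  have hdiagC : diag (a • A + b • B) = hC.eigenvalues := by
    have h := hC.conjStarAlgAut_star_eigenvectorUnitary
    ext i
    simp only [Unitary.conjStarAlgAut_apply, Unitary.coe_star, star_star] at h
    simp [diag, W, h]
  have hlin : diag (a • A + b • B) = a • diag A + b • diag B := by
    ext i
    simp [diag, mul_add, add_mul]
  have hW : W ∈ unitaryGroup m ℂ := hC.eigenvectorUnitary.2
  calc a • g hA.eigenvalues + b • g hB.eigenvalues ≤ a • g (diag A) + b • g (diag B) :=
        add_le_add
          (smul_le_smul_of_nonneg_left (hg.apply_eigenvalues_le_apply_diag_conj hsym hA hW) ha)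
          (smul_le_smul_of_nonneg_left (hg.apply_eigenvalues_le_apply_diag_conj hsym hB hW) hb)
    _ ≤ g (a • diag A + b • diag B) := hg.2 trivial trivial ha hb hab
    _ = g hC.eigenvalues := by rw [← hlin, hdiagC]

end Spectral

/-- the k-trace preserves concavity of nonnegative scalar
functions (applied spectrally via the continuous functional calculus). -/
theorem ktrace_concavity_preserving {n k : ℕ} (hk : 1 ≤ k) (hkn : k ≤ n)
    (f : ℝ → ℝ) (hf0 : ∀ x, 0 ≤ f x) (hf : ConcaveOn ℝ Set.univ f) :
    ConcaveOn ℝ {A : Matrix (Fin n) (Fin n) ℂ | A.PosSemidef}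
      (fun A => (trK k (cfc f A)).re ^ ((k : ℝ)⁻¹)) := by
  set ψ : (Fin n → ℝ) → ℝ := fun x => esymm univ k (f ∘ x) ^ (k⁻¹ : ℝ)
  have hψ : ConcaveOn ℝ Set.univ ψ :=
    concaveOn_esymm_comp_rpow_inv hk (by simpa using hkn) hf0 hf
  have hsym : ∀ (σ : Equiv.Perm (Fin n)) x, ψ (x ∘ σ) = ψ x := fun σ x =>
    congrArg (· ^ (k⁻¹ : ℝ)) (esymm_comp_perm σ (f ∘ x))
  have hval : ∀ (M : Matrix (Fin n) (Fin n) ℂ) (hM : M.IsHermitian),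
      (trK k (cfc f M)).re ^ (k⁻¹ : ℝ) = ψ hM.eigenvalues := fun M hM => by
    rw [trK_cfc_eq_esymm hM f hkn, Complex.ofReal_re]
  refine ⟨fun A hA B hB a b ha hb _ => (hA.smul ha).add (hB.smul hb),
    fun A hA B hB a b ha hb hab => ?_⟩
  have hC : (a • A + b • B).PosSemidef := (hA.smul ha).add (hB.smul hb)
  simp only [hval A hA.1, hval B hB.1, hval _ hC.1]
  exact hψ.le_apply_eigenvalues_smul_add_smul hsym hA.1 hB.1 hC.1 ha hb hab
end
end

section
/- Let C be a convex cone in a real vector space and f : C → [0, ∞) positively homogeneous of order 1 (f(λx) = λ f(x) for λ > 0). Then for s ∈ (0,1), f is concave if and only if f^s is concave; and for s ∈ (1, ∞), f is convex if and only if f^s is convex. -/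
/-! Raising a nonnegative function to the power `s` preserves concavity for `s ≤ 1` and convexity
for `s ≥ 1`, since `t ↦ t ^ s` is then concave (convex) and monotone on `[0, ∞)`. Conversely, a
positively `1`-homogeneous function on a convex cone is concave iff superadditive and convex iff
subadditive. Concavity of `f ^ s` at the points `a⁻¹ • x` and `b⁻¹ • y` with weights `a + b = 1`
gives `a ^ (1 - s) * f x ^ s + b ^ (1 - s) * f y ^ s ≤ f (x + y) ^ s`, and the weight
`a = f x / (f x + f y)` turns the left side into `(f x + f y) ^ s`; when `f x = 0` this weight is
not admissible and is reached as the limit `a → 0` instead. Convexity is treated symmetrically. -/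

open Set Filter Topology

namespace Real

lemma div_rpow_one_sub_mul_rpow {u w : ℝ} (hu : 0 < u) (hw : 0 < w) (s : ℝ) :
    (u / w) ^ (1 - s) * u ^ s = u / w * w ^ s := by
  have ha : 0 < u / w := div_pos hu hw
  calc (u / w) ^ (1 - s) * u ^ s = (u / w) ^ (1 - s) * (u / w * w) ^ s := by
        rw [div_mul_cancel₀ u hw.ne']
    _ = u / w * w ^ s := by
        rw [mul_rpow ha.le hw.le, ← mul_assoc, ← rpow_add ha, sub_add_cancel, rpow_one]

lemma tendsto_rpow_mul_nhdsLT_one (p c : ℝ) :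
    Tendsto (fun b : ℝ => b ^ p * c) (𝓝[<] 1) (𝓝 c) := by
  simpa using ((continuousAt_rpow_const 1 p (Or.inl one_ne_zero)).tendsto.mul_const c).mono_left
    nhdsWithin_le_nhds

lemma le_of_forall_rpow_mul_le {p c d : ℝ} (h : ∀ b ∈ Ioo (0 : ℝ) 1, b ^ p * c ≤ d) :
    c ≤ d :=
  le_of_tendsto (tendsto_rpow_mul_nhdsLT_one p c) <|
    mem_of_superset (Ioo_mem_nhdsLT zero_lt_one) h

lemma le_of_forall_le_rpow_mul {p c d : ℝ} (h : ∀ b ∈ Ioo (0 : ℝ) 1, d ≤ b ^ p * c) :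
    d ≤ c :=
  ge_of_tendsto (tendsto_rpow_mul_nhdsLT_one p c) <|
    mem_of_superset (Ioo_mem_nhdsLT zero_lt_one) h

end Real

section Cone

variable {V : Type*} [AddCommGroup V] [Module ℝ V] {C : Set V} {f : V → ℝ} {s : ℝ}

theorem Convex.add_mem_of_smul_mem (hC : Convex ℝ C)
    (hcone : ∀ x ∈ C, ∀ l : ℝ, 0 < l → l • x ∈ C) {x y : V} (hx : x ∈ C) (hy : y ∈ C) :
    x + y ∈ C := by
  have hmid := hC hx hy (by norm_num : (0 : ℝ) ≤ 1 / 2) (by norm_num : (0 : ℝ) ≤ 1 / 2)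
    (by norm_num)
  convert hcone _ hmid 2 two_pos using 1
  module

theorem ConcaveOn.rpow (hf : ConcaveOn ℝ C f) (hf0 : ∀ x ∈ C, 0 ≤ f x) {p : ℝ} (hp0 : 0 ≤ p)
    (hp1 : p ≤ 1) : ConcaveOn ℝ C fun x => f x ^ p :=
  ⟨hf.1, fun x hx y hy _ _ ha hb hab =>
    ((Real.concaveOn_rpow hp0 hp1).2 (hf0 x hx) (hf0 y hy) ha hb hab).trans <|
      Real.rpow_le_rpow (by simp only [smul_eq_mul]; positivity [hf0 x hx, hf0 y hy])
        (hf.2 hx hy ha hb hab) hp0⟩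

theorem ConvexOn.rpow (hf : ConvexOn ℝ C f) (hf0 : ∀ x ∈ C, 0 ≤ f x) {p : ℝ} (hp1 : 1 ≤ p) :
    ConvexOn ℝ C fun x => f x ^ p :=
  ⟨hf.1, fun x hx y hy _ _ ha hb hab =>
    (Real.rpow_le_rpow (hf0 _ (hf.1 hx hy ha hb hab)) (hf.2 hx hy ha hb hab)
      (zero_le_one.trans hp1)).trans <|
      (convexOn_rpow hp1).2 (hf0 x hx) (hf0 y hy) ha hb hab⟩

theorem concaveOn_of_superadditive (hC : Convex ℝ C)
    (hcone : ∀ x ∈ C, ∀ l : ℝ, 0 < l → l • x ∈ C)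
    (hhom : ∀ x ∈ C, ∀ l : ℝ, 0 < l → f (l • x) = l * f x)
    (hsup : ∀ x ∈ C, ∀ y ∈ C, f x + f y ≤ f (x + y)) : ConcaveOn ℝ C f := by
  refine ⟨hC, fun x hx y hy a b ha hb hab => ?_⟩
  rcases ha.eq_or_lt with rfl | ha
  · obtain rfl : b = 1 := by linarith
    simp
  rcases hb.eq_or_lt with rfl | hb
  · obtain rfl : a = 1 := by linarith
    simp
  simpa only [smul_eq_mul, hhom x hx a ha, hhom y hy b hb] using
    hsup _ (hcone x hx a ha) _ (hcone y hy b hb)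

theorem convexOn_of_subadditive (hC : Convex ℝ C)
    (hcone : ∀ x ∈ C, ∀ l : ℝ, 0 < l → l • x ∈ C)
    (hhom : ∀ x ∈ C, ∀ l : ℝ, 0 < l → f (l • x) = l * f x)
    (hsub : ∀ x ∈ C, ∀ y ∈ C, f (x + y) ≤ f x + f y) : ConvexOn ℝ C f := by
  refine ⟨hC, fun x hx y hy a b ha hb hab => ?_⟩
  rcases ha.eq_or_lt with rfl | ha
  · obtain rfl : b = 1 := by linarith
    simp
  rcases hb.eq_or_lt with rfl | hb
  · obtain rfl : a = 1 := by linarith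
    simp
  simpa only [smul_eq_mul, hhom x hx a ha, hhom y hy b hb] using
    hsub _ (hcone x hx a ha) _ (hcone y hy b hb)

theorem mul_rpow_inv_smul (hf0 : ∀ x ∈ C, 0 ≤ f x)
    (hhom : ∀ x ∈ C, ∀ l : ℝ, 0 < l → f (l • x) = l * f x) {x : V} (hx : x ∈ C) {a : ℝ}
    (ha : 0 < a) : a * f (a⁻¹ • x) ^ s = a ^ (1 - s) * f x ^ s := by
  rw [hhom x hx _ (inv_pos.2 ha), Real.mul_rpow (inv_nonneg.2 ha.le) (hf0 x hx),
    Real.inv_rpow ha.le, Real.rpow_sub ha, Real.rpow_one]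
  field_simp

theorem ConcaveOn.weighted_rpow_le (hg : ConcaveOn ℝ C fun x => f x ^ s)
    (hcone : ∀ x ∈ C, ∀ l : ℝ, 0 < l → l • x ∈ C) (hf0 : ∀ x ∈ C, 0 ≤ f x)
    (hhom : ∀ x ∈ C, ∀ l : ℝ, 0 < l → f (l • x) = l * f x) {x y : V} (hx : x ∈ C) (hy : y ∈ C)
    {a b : ℝ} (ha : 0 < a) (hb : 0 < b) (hab : a + b = 1) :
    a ^ (1 - s) * f x ^ s + b ^ (1 - s) * f y ^ s ≤ f (x + y) ^ s := by
  have h := hg.2 (hcone _ hx _ (inv_pos.2 ha)) (hcone _ hy _ (inv_pos.2 hb)) ha.le hb.le hab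
  simpa only [smul_eq_mul, smul_smul, mul_inv_cancel₀ ha.ne', mul_inv_cancel₀ hb.ne', one_smul,
    mul_rpow_inv_smul hf0 hhom hx ha, mul_rpow_inv_smul hf0 hhom hy hb] using h

theorem ConvexOn.rpow_le_weighted (hg : ConvexOn ℝ C fun x => f x ^ s)
    (hcone : ∀ x ∈ C, ∀ l : ℝ, 0 < l → l • x ∈ C) (hf0 : ∀ x ∈ C, 0 ≤ f x)
    (hhom : ∀ x ∈ C, ∀ l : ℝ, 0 < l → f (l • x) = l * f x) {x y : V} (hx : x ∈ C) (hy : y ∈ C)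
    {a b : ℝ} (ha : 0 < a) (hb : 0 < b) (hab : a + b = 1) :
    f (x + y) ^ s ≤ a ^ (1 - s) * f x ^ s + b ^ (1 - s) * f y ^ s := by
  have h := hg.2 (hcone _ hx _ (inv_pos.2 ha)) (hcone _ hy _ (inv_pos.2 hb)) ha.le hb.le hab
  simpa only [smul_eq_mul, smul_smul, mul_inv_cancel₀ ha.ne', mul_inv_cancel₀ hb.ne', one_smul,
    mul_rpow_inv_smul hf0 hhom hx ha, mul_rpow_inv_smul hf0 hhom hy hb] using h

theorem ConcaveOn.superadditive_of_rpow (hg : ConcaveOn ℝ C fun x => f x ^ s) (hs : 0 < s)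
    (hcone : ∀ x ∈ C, ∀ l : ℝ, 0 < l → l • x ∈ C) (hf0 : ∀ x ∈ C, 0 ≤ f x)
    (hhom : ∀ x ∈ C, ∀ l : ℝ, 0 < l → f (l • x) = l * f x) {x y : V} (hx : x ∈ C) (hy : y ∈ C) :
    f x + f y ≤ f (x + y) := by
  have hxy := hg.1.add_mem_of_smul_mem hcone hx hy
  rw [← Real.rpow_le_rpow_iff (add_nonneg (hf0 x hx) (hf0 y hy)) (hf0 _ hxy) hs]
  have key := fun {a b : ℝ} => hg.weighted_rpow_le hcone hf0 hhom hx hy (a := a) (b := b)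
  rcases (hf0 x hx).eq_or_lt with hu | hu
  · rw [← hu, zero_add]
    refine Real.le_of_forall_rpow_mul_le (p := 1 - s) fun b hb => ?_
    simpa [← hu, Real.zero_rpow hs.ne'] using key (sub_pos.2 hb.2) hb.1 (sub_add_cancel 1 b)
  rcases (hf0 y hy).eq_or_lt with hv | hv
  · rw [← hv, add_zero]
    refine Real.le_of_forall_rpow_mul_le (p := 1 - s) fun a ha => ?_
    simpa [← hv, Real.zero_rpow hs.ne'] using key ha.1 (sub_pos.2 ha.2) (add_sub_cancel a 1)
  have hw : 0 < f x + f y := add_pos hu hv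
  have h := key (div_pos hu hw) (div_pos hv hw) (by field_simp)
  rwa [Real.div_rpow_one_sub_mul_rpow hu hw, Real.div_rpow_one_sub_mul_rpow hv hw, ← add_mul,
    ← add_div, div_self hw.ne', one_mul] at h

theorem ConvexOn.subadditive_of_rpow (hg : ConvexOn ℝ C fun x => f x ^ s) (hs : 0 < s)
    (hcone : ∀ x ∈ C, ∀ l : ℝ, 0 < l → l • x ∈ C) (hf0 : ∀ x ∈ C, 0 ≤ f x)
    (hhom : ∀ x ∈ C, ∀ l : ℝ, 0 < l → f (l • x) = l * f x) {x y : V} (hx : x ∈ C) (hy : y ∈ C) :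
    f (x + y) ≤ f x + f y := by
  have hxy := hg.1.add_mem_of_smul_mem hcone hx hy
  rw [← Real.rpow_le_rpow_iff (hf0 _ hxy) (add_nonneg (hf0 x hx) (hf0 y hy)) hs]
  have key := fun {a b : ℝ} => hg.rpow_le_weighted hcone hf0 hhom hx hy (a := a) (b := b)
  rcases (hf0 x hx).eq_or_lt with hu | hu
  · rw [← hu, zero_add]
    refine Real.le_of_forall_le_rpow_mul (p := 1 - s) fun b hb => ?_
    simpa [← hu, Real.zero_rpow hs.ne'] using key (sub_pos.2 hb.2) hb.1 (sub_add_cancel 1 b)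
  rcases (hf0 y hy).eq_or_lt with hv | hv
  · rw [← hv, add_zero]
    refine Real.le_of_forall_le_rpow_mul (p := 1 - s) fun a ha => ?_
    simpa [← hv, Real.zero_rpow hs.ne'] using key ha.1 (sub_pos.2 ha.2) (add_sub_cancel a 1)
  have hw : 0 < f x + f y := add_pos hu hv
  have h := key (div_pos hu hw) (div_pos hv hw) (by field_simp)
  rwa [Real.div_rpow_one_sub_mul_rpow hu hw, Real.div_rpow_one_sub_mul_rpow hv hw, ← add_mul,
    ← add_div, div_self hw.ne', one_mul] at h

end Cone

/-- for a nonnegative positively-1-homogeneous function on a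
convex cone, concavity (resp. convexity) is equivalent to concavity of
`f^s` for `s ∈ (0,1)` (resp. convexity of `f^s` for `s > 1`). -/
theorem homogeneous_concave_convex_iff {V : Type*} [AddCommGroup V] [Module ℝ V]
    (C : Set V) (hC : Convex ℝ C)
    (hcone : ∀ x ∈ C, ∀ l : ℝ, 0 < l → l • x ∈ C)
    (f : V → ℝ) (hf0 : ∀ x ∈ C, 0 ≤ f x)
    (hhom : ∀ x ∈ C, ∀ l : ℝ, 0 < l → f (l • x) = l * f x) :
    (∀ s : ℝ, s ∈ Set.Ioo (0 : ℝ) 1 →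
      (ConcaveOn ℝ C f ↔ ConcaveOn ℝ C (fun x => f x ^ s))) ∧
    (∀ s : ℝ, 1 < s →
      (ConvexOn ℝ C f ↔ ConvexOn ℝ C (fun x => f x ^ s))) := by
  refine ⟨fun s hs => ⟨fun hf => hf.rpow hf0 hs.1.le hs.2.le, fun hg => ?_⟩,
    fun s hs => ⟨fun hf => hf.rpow hf0 hs.le, fun hg => ?_⟩⟩
  · exact concaveOn_of_superadditive hC hcone hhom fun x hx y hy =>
      hg.superadditive_of_rpow hs.1 hcone hf0 hhom hx hy
  · exact convexOn_of_subadditive hC hcone hhom fun x hx y hy =>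
      hg.subadditive_of_rpow (zero_lt_one.trans hs) hcone hf0 hhom hx hy
end
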